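/- arXiv:2010.10762 — 2 statements merged into one kernel-verified Lean document; each statement's English description precedes it below -/
import Mathlib

section
/- Let C be a binary linear [k+t, k] code with systematic generator matrix G = [I_k | A], and let S ⊆ {1,...,k} be such that c^S is a minimal codeword of C. Then 1 ≤ #S ≤ t+1. Moreover, if #S = t+1, then c^S_I = 0. -/
open Finset

/-- The support of a vector `x ∈ F_2^n`: the set of nonzero coordinates. -/
def supp {n : ℕ} (x : Fin n → ZMod 2) : Set (Fin n) := {i | x i ≠ 0}

/-- `c` is a minimal codeword of the linear code (subspace) `C ≤ F_2^n`:
it is a nonzero codeword and no nonzero codeword has support properly contained in `supp c`. -/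
def IsMinimal {n : ℕ} (C : Submodule (ZMod 2) (Fin n → ZMod 2)) (c : Fin n → ZMod 2) : Prop :=
  c ∈ C ∧ c ≠ 0 ∧ ∀ c' ∈ C, c' ≠ 0 → ¬ supp c' ⊂ supp c

/-- `M(C)`: the number of minimal codewords of `C`. -/
noncomputable def Mcode {n : ℕ} (C : Submodule (ZMod 2) (Fin n → ZMod 2)) : ℕ :=
  Set.ncard {c | IsMinimal C c}

/-- The `i`-th row `g^i` of the systematic generator matrix `G = [I_k | A]`. -/
def row {k t : ℕ} (A : Fin k → Fin t → ZMod 2) (i : Fin k) : Fin (k + t) → ZMod 2 :=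
  Fin.append (Pi.single i 1) (A i)

/-- The binary linear `[k+t, k]` code with systematic generator matrix `G = [I_k | A]`. -/
def genCode {k t : ℕ} (A : Fin k → Fin t → ZMod 2) :
    Submodule (ZMod 2) (Fin (k + t) → ZMod 2) :=
  Submodule.span (ZMod 2) (Set.range (row A))

/-- `c^S = ∑_{i ∈ S} g^i`. -/
def cS {k t : ℕ} (A : Fin k → Fin t → ZMod 2) (S : Finset (Fin k)) : Fin (k + t) → ZMod 2 :=
  ∑ i ∈ S, row A i

/-- `c_I`: the restriction of a codeword to its last `t` coordinates (the information bits). -/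
def infoBits {k t : ℕ} (c : Fin (k + t) → ZMod 2) : Fin t → ZMod 2 :=
  fun j => c (Fin.natAdd k j)

/-- `a_τ(A)` : the number of indices `i` with `g^i_I = A i = τ`. -/
def aCount {k t : ℕ} (A : Fin k → Fin t → ZMod 2) (τ : Fin t → ZMod 2) : ℕ :=
  (Finset.univ.filter fun i => A i = τ).card

/-- `M_2(n, k)`: the maximum of `M(C)` over all binary linear `[n, k]` codes `C`. -/
noncomputable def M2 (n k : ℕ) : ℕ :=
  sSup {m | ∃ C : Submodule (ZMod 2) (Fin n → ZMod 2),
    Module.finrank (ZMod 2) C = k ∧ Mcode C = m}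


/-! Identify subsets `T ⊆ S` with vectors of `𝔽₂^S`. If `c^S` is minimal, a nonempty `T ⊆ S` with
`∑_{i ∈ T} A_i = 0` gives a codeword `c^T` supported on the systematic positions of `T`, so `T = S`.
Hence the kernel of `x ↦ ∑ x_i A_i : 𝔽₂^S → 𝔽₂^t` is contained in `{0, 𝟙}`, and rank–nullity gives
`#S ≤ t + 1`; equality forces `𝟙` into the kernel, which says `c^S_I = 0`. -/

open Module

lemma zmod2_eq_one_of_ne_zero {a : ZMod 2} : a ≠ 0 → a = 1 := by
  revert a; decide

section ZModTwo

variable {ι V : Type*} [Fintype ι] [AddCommGroup V] [Module (ZMod 2) V]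

lemma sum_smul_eq_sum_filter_ne_zero (x : ι → ZMod 2) (v : ι → V) :
    ∑ i, x i • v i = ∑ i ∈ univ.filter (x · ≠ 0), v i := by
  rw [sum_filter]
  refine sum_congr rfl fun i _ => ?_
  split_ifs with hi
  · rw [zmod2_eq_one_of_ne_zero hi, one_smul]
  · rw [not_not.1 hi, zero_smul]

lemma ker_linearCombination_le_span_one (v : ι → V)
    (h : ∀ T : Finset ι, T.Nonempty → ∑ i ∈ T, v i = 0 → T = univ) :
    LinearMap.ker (Fintype.linearCombination (ZMod 2) v) ≤ (ZMod 2) ∙ fun _ => 1 := by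
  intro x hx
  rw [LinearMap.mem_ker, Fintype.linearCombination_apply, sum_smul_eq_sum_filter_ne_zero] at hx
  obtain rfl | hx0 := eq_or_ne x 0
  · exact zero_mem _
  obtain ⟨i, hi⟩ := Function.ne_iff.1 hx0
  have hsupp := h _ ⟨i, by simpa using hi⟩ hx
  have hx1 : x = fun _ => 1 := funext fun j => zmod2_eq_one_of_ne_zero <| by
    simpa using (hsupp.symm ▸ mem_univ j : j ∈ univ.filter (x · ≠ 0))
  exact hx1 ▸ Submodule.mem_span_singleton_self _

theorem card_le_finrank_add_one_of_forall_sum_eq_zero [FiniteDimensional (ZMod 2) V]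
    (v : ι → V) (h : ∀ T : Finset ι, T.Nonempty → ∑ i ∈ T, v i = 0 → T = univ) :
    Fintype.card ι ≤ finrank (ZMod 2) V + 1 ∧
      (Fintype.card ι = finrank (ZMod 2) V + 1 → ∑ i, v i = 0) := by
  set f := Fintype.linearCombination (ZMod 2) v
  have hker : LinearMap.ker f ≤ (ZMod 2) ∙ fun _ => 1 := ker_linearCombination_le_span_one v h
  have hspan : finrank (ZMod 2) ((ZMod 2) ∙ fun _ : ι => (1 : ZMod 2)) ≤ 1 :=
    (finrank_span_le_card _).trans (by simp)
  have hrank := LinearMap.finrank_range_add_finrank_ker f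
  have hrange := Submodule.finrank_le (LinearMap.range f)
  have hkerle := Submodule.finrank_mono hker
  rw [finrank_fintype_fun_eq_card] at hrank
  refine ⟨by omega, fun hcard => ?_⟩
  have hker_eq := Submodule.eq_of_le_of_finrank_le hker (by omega)
  have hone : (fun _ => 1) ∈ LinearMap.ker f := hker_eq ▸ Submodule.mem_span_singleton_self _
  simpa [f, Fintype.linearCombination_apply] using hone

end ZModTwo

section SystematicCode

variable {k t : ℕ} (A : Fin k → Fin t → ZMod 2)

lemma cS_castAdd (S : Finset (Fin k)) (m : Fin k) :
    cS A S (Fin.castAdd t m) = if m ∈ S then 1 else 0 := by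
  simp [cS, row, Finset.sum_apply, Pi.single_apply]

lemma castAdd_mem_supp_cS {S : Finset (Fin k)} {m : Fin k} :
    Fin.castAdd t m ∈ supp (cS A S) ↔ m ∈ S := by
  simp [supp, cS_castAdd]

lemma infoBits_cS (S : Finset (Fin k)) : infoBits (cS A S) = ∑ i ∈ S, A i := by
  ext j
  simp [infoBits, cS, row, Finset.sum_apply]

lemma cS_mem_genCode (S : Finset (Fin k)) : cS A S ∈ genCode A :=
  Submodule.sum_mem _ fun i _ => Submodule.subset_span ⟨i, rfl⟩

lemma cS_ne_zero {S : Finset (Fin k)} (hS : S.Nonempty) : cS A S ≠ 0 := by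
  obtain ⟨m, hm⟩ := hS
  intro h0
  simpa [supp, h0] using (castAdd_mem_supp_cS A).2 hm

lemma supp_cS_of_infoBits_eq_zero {S : Finset (Fin k)} (hS : infoBits (cS A S) = 0) :
    supp (cS A S) = Fin.castAdd t '' S := by
  ext x
  induction x using Fin.addCases with
  | left m => simp [castAdd_mem_supp_cS, (Fin.castAdd_injective k t).eq_iff]
  | right j =>
    have hj : cS A S (Fin.natAdd k j) = 0 := congrFun hS j
    have hne (m : Fin k) : Fin.castAdd t m ≠ Fin.natAdd k j := by
      simp only [ne_eq, Fin.ext_iff, Fin.val_castAdd, Fin.val_natAdd]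
      omega
    simp [supp, hj, hne]

lemma IsMinimal.eq_of_subset {S T : Finset (Fin k)} (h : IsMinimal (genCode A) (cS A S))
    (hTS : T ⊆ S) (hT : T.Nonempty) (hsum : ∑ i ∈ T, A i = 0) : T = S := by
  by_contra hne
  refine h.2.2 _ (cS_mem_genCode A T) (cS_ne_zero A hT) ?_
  rw [supp_cS_of_infoBits_eq_zero A (by rw [infoBits_cS, hsum])]
  refine ((Fin.castAdd_injective k t).image_strictMono (b := S) ?_).trans_subset ?_
  · exact_mod_cast hTS.ssubset_of_ne hne
  · rintro _ ⟨m, hm, rfl⟩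
    exact (castAdd_mem_supp_cS A).2 hm

end SystematicCode

theorem stmt2 (k t : ℕ) (A : Fin k → Fin t → ZMod 2) (S : Finset (Fin k))
    (h : IsMinimal (genCode A) (cS A S)) :
    1 ≤ S.card ∧ S.card ≤ t + 1 ∧ (S.card = t + 1 → infoBits (cS A S) = 0) := by
  have hS : S.Nonempty := nonempty_iff_ne_empty.2 fun hS => h.2.1 (by simp [hS, cS])
  have hzero : ∀ T : Finset S, T.Nonempty → ∑ i ∈ T, A i = 0 → T = univ := by
    intro T hT hsum
    have hTS := h.eq_of_subset A (T := T.map (.subtype _)) (map_subtype_subset T) hT.map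
      (by rwa [sum_map])
    apply map_injective (.subtype (· ∈ S))
    rw [hTS, univ_eq_attach, attach_map_val]
  obtain ⟨hle, heq⟩ := card_le_finrank_add_one_of_forall_sum_eq_zero (fun i : S => A i) hzero
  rw [Fintype.card_coe, finrank_fin_fun] at hle heq
  refine ⟨hS.card_pos, hle, fun hcard => ?_⟩
  rw [infoBits_cS, ← sum_coe_sort]
  exact heq hcard
end

section
/- For every positive integer k, M_2(k+1, k) = C(k+1, 2) = (k+1)k/2. -/
open Finset

section Aux

variable {n : ℕ}

lemma zmod2_eq_one {z : ZMod 2} (h : z ≠ 0) : z = 1 := by revert z; decide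

lemma zmod2_eq_zero {z : ZMod 2} (h : z ≠ 1) : z = 0 := by revert z; decide

/-- indicator vector of a finset -/
def ind (T : Finset (Fin n)) : Fin n → ZMod 2 := fun i => if i ∈ T then 1 else 0

/-- support as a finset -/
def suppF (c : Fin n → ZMod 2) : Finset (Fin n) := Finset.univ.filter fun i => c i ≠ 0

lemma mem_suppF {c : Fin n → ZMod 2} {i} : i ∈ suppF c ↔ c i ≠ 0 := by simp [suppF]

lemma supp_eq_coe (c : Fin n → ZMod 2) : supp c = ↑(suppF c) := by
  ext i; simp [supp, suppF]

lemma eq_ind_suppF (c : Fin n → ZMod 2) : c = ind (suppF c) := by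
  funext i
  by_cases h : c i = 0 <;> simp [ind, mem_suppF, h]
  exact zmod2_eq_one h

lemma suppF_ind (T : Finset (Fin n)) : suppF (ind T) = T := by
  ext i; by_cases h : i ∈ T <;> simp [suppF, ind, h]

lemma ind_injective : Function.Injective (ind (n := n)) := fun T T' h => by
  rw [← suppF_ind (n := n) T, ← suppF_ind (n := n) T', h]

lemma ind_ne_zero {T : Finset (Fin n)} (h : T.Nonempty) : ind T ≠ 0 := by
  obtain ⟨j, hj⟩ := h
  intro e
  have := congrFun e j
  simp [ind, hj] at this

lemma zero_of_suppF_empty {c : Fin n → ZMod 2} (h : suppF c = ∅) : c = 0 := by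
  rw [eq_ind_suppF c, h]; funext i; simp [ind]

def phi (h : Fin n → ZMod 2) : (Fin n → ZMod 2) →ₗ[ZMod 2] ZMod 2 where
  toFun x := ∑ i, h i * x i
  map_add' x y := by simp [mul_add, Finset.sum_add_distrib]
  map_smul' m x := by simp [Finset.mul_sum, mul_left_comm]

lemma phi_apply (h c : Fin n → ZMod 2) : phi h c = ∑ i ∈ suppF c, h i := by
  show ∑ i, h i * c i = _
  rw [← Finset.sum_subset (Finset.subset_univ (suppF c))]
  · refine Finset.sum_congr rfl fun i hi => ?_
    rw [zmod2_eq_one (mem_suppF.mp hi), mul_one]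
  · intro i _ hi
    rw [of_not_not (fun hx => hi (mem_suppF.mpr hx)), mul_zero]

lemma phi_ind (h : Fin n → ZMod 2) (T : Finset (Fin n)) : phi h (ind T) = ∑ i ∈ T, h i := by
  rw [phi_apply, suppF_ind]

end Aux


section Char

variable {n : ℕ}

/-- The support of the parity check `h`. -/
def Sh (h : Fin n → ZMod 2) : Finset (Fin n) := Finset.univ.filter fun i => h i = 1

/-- The supports of minimal codewords: singletons outside `Sh`, pairs inside `Sh`. -/
def good (h : Fin n → ZMod 2) : Finset (Finset (Fin n)) :=
  ((Sh h)ᶜ.image fun j => {j}) ∪ (Sh h).powersetCard 2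

lemma mem_Sh {h : Fin n → ZMod 2} {i} : i ∈ Sh h ↔ h i = 1 := by simp [Sh]

lemma isMinimal_ker_iff (h : Fin n → ZMod 2) (c : Fin n → ZMod 2) :
    IsMinimal (LinearMap.ker (phi h)) c ↔ ∃ T ∈ good h, c = ind T := by
  constructor
  · rintro ⟨hc, hc0, hmin⟩
    rw [LinearMap.mem_ker] at hc
    have hne : (suppF c).Nonempty := by
      rw [Finset.nonempty_iff_ne_empty]
      intro e; exact hc0 (zero_of_suppF_empty e)
    by_cases hcase : ∃ j ∈ suppF c, h j = 0
    · obtain ⟨j, hj, hj0⟩ := hcase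
      have h1 : ind {j} ∈ LinearMap.ker (phi h) := by
        rw [LinearMap.mem_ker, phi_ind]; simp [hj0]
      have h2 : ind {j} ≠ 0 := ind_ne_zero ⟨j, Finset.mem_singleton_self j⟩
      have hsub : supp (ind {j}) ⊆ supp c := by
        rw [supp_eq_coe, supp_eq_coe, suppF_ind]
        simpa using hj
      have heq : supp (ind {j}) = supp c :=
        hsub.antisymm (fun x hx => by
          by_contra hxc
          exact hmin _ h1 h2 ⟨hsub, fun hss => hxc (hss hx)⟩)
      have hF : suppF c = {j} := by
        apply Finset.coe_injective
        rw [← supp_eq_coe]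
        rw [← heq, supp_eq_coe, suppF_ind]
      refine ⟨{j}, ?_, by rw [eq_ind_suppF c, hF]⟩
      apply Finset.mem_union_left
      exact Finset.mem_image.mpr ⟨j, by simp [mem_Sh, hj0], rfl⟩
    · push_neg at hcase
      have hall : ∀ j ∈ suppF c, h j = 1 := fun j hj => zmod2_eq_one (hcase j hj)
      have hcard2 : 2 ∣ (suppF c).card := by
        rw [phi_apply] at hc
        rw [Finset.sum_congr rfl hall] at hc
        have : ((suppF c).card : ZMod 2) = 0 := by simpa using hc
        exact (ZMod.natCast_eq_zero_iff _ 2).mp this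
      have h1lt : 1 < (suppF c).card := by
        have := Finset.card_pos.mpr hne
        omega
      obtain ⟨a, ha, b, hb, hab⟩ := Finset.one_lt_card.mp h1lt
      have h1 : ind {a, b} ∈ LinearMap.ker (phi h) := by
        rw [LinearMap.mem_ker, phi_ind, Finset.sum_pair hab, hall a ha, hall b hb]
        decide
      have h2 : ind {a, b} ≠ 0 := ind_ne_zero ⟨a, by simp⟩
      have hsub : supp (ind {a, b}) ⊆ supp c := by
        rw [supp_eq_coe, supp_eq_coe, suppF_ind]
        intro x hx
        simp only [Finset.coe_insert, Finset.coe_singleton, Set.mem_insert_iff,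
          Set.mem_singleton_iff] at hx
        rcases hx with rfl | rfl
        · exact Finset.mem_coe.mpr ha
        · exact Finset.mem_coe.mpr hb
      have heq : supp (ind {a, b}) = supp c :=
        hsub.antisymm (fun x hx => by
          by_contra hxc
          exact hmin _ h1 h2 ⟨hsub, fun hss => hxc (hss hx)⟩)
      have hF : suppF c = {a, b} := by
        apply Finset.coe_injective
        rw [← supp_eq_coe, ← heq, supp_eq_coe, suppF_ind]
      refine ⟨{a, b}, ?_, by rw [eq_ind_suppF c, hF]⟩
      apply Finset.mem_union_right
      rw [Finset.mem_powersetCard]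
      constructor
      · intro x hx
        rcases Finset.mem_insert.mp hx with rfl | hx
        · exact mem_Sh.mpr (hall x ha)
        · rw [Finset.mem_singleton] at hx; subst hx
          exact mem_Sh.mpr (hall x hb)
      · exact Finset.card_pair hab
  · rintro ⟨T, hT, rfl⟩
    rcases Finset.mem_union.mp hT with hT | hT
    · obtain ⟨j, hj, rfl⟩ := Finset.mem_image.mp hT
      have hj0 : h j = 0 := zmod2_eq_zero (by simpa [mem_Sh] using hj)
      refine ⟨by rw [LinearMap.mem_ker, phi_ind]; simp [hj0],
        ind_ne_zero ⟨j, Finset.mem_singleton_self j⟩, ?_⟩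
      intro c' _ hc'0 hss
      rw [supp_eq_coe (ind {j}), suppF_ind] at hss
      have : supp c' = ∅ := Set.ssubset_singleton_iff.mp (by simpa using hss)
      apply hc'0
      apply zero_of_suppF_empty
      rwa [supp_eq_coe, Finset.coe_eq_empty] at this
    · rw [Finset.mem_powersetCard] at hT
      obtain ⟨hTs, hT2⟩ := hT
      obtain ⟨a, b, hab, rfl⟩ := Finset.card_eq_two.mp hT2
      have ha : h a = 1 := mem_Sh.mp (hTs (by simp))
      have hb : h b = 1 := mem_Sh.mp (hTs (by simp))
      refine ⟨by rw [LinearMap.mem_ker, phi_ind, Finset.sum_pair hab, ha, hb]; decide,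
        ind_ne_zero ⟨a, by simp⟩, ?_⟩
      intro c' hc' hc'0 hss
      rw [supp_eq_coe (ind {a,b}), suppF_ind, supp_eq_coe, Finset.coe_ssubset] at hss
      have hlt : (suppF c').card < 2 := by
        have := Finset.card_lt_card hss
        rwa [Finset.card_pair hab] at this
      have hne : (suppF c').Nonempty := by
        rw [Finset.nonempty_iff_ne_empty]
        intro e; exact hc'0 (zero_of_suppF_empty e)
      have h1 : (suppF c').card = 1 := by
        have := Finset.card_pos.mpr hne; omega
      obtain ⟨x, hx⟩ := Finset.card_eq_one.mp h1
      have hxab : x ∈ ({a, b} : Finset (Fin n)) := hss.1 (by rw [hx]; simp)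
      have hx1 : h x = 1 := by
        rcases Finset.mem_insert.mp hxab with rfl | hxb
        · exact ha
        · rw [Finset.mem_singleton] at hxb; subst hxb; exact hb
      rw [LinearMap.mem_ker, phi_apply, hx, Finset.sum_singleton, hx1] at hc'
      exact one_ne_zero hc'

end Char

section Count

variable {n : ℕ}

lemma Mcode_ker (h : Fin n → ZMod 2) :
    Mcode (LinearMap.ker (phi h)) = (n - (Sh h).card) + (Sh h).card.choose 2 := by
  have hset : {c | IsMinimal (LinearMap.ker (phi h)) c} = ↑((good h).image ind) := by
    ext c
    simp only [Set.mem_setOf_eq, isMinimal_ker_iff, Finset.coe_image, Set.mem_image,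
      Finset.mem_coe]
    constructor
    · rintro ⟨T, hT, rfl⟩; exact ⟨T, hT, rfl⟩
    · rintro ⟨T, hT, rfl⟩; exact ⟨T, hT, rfl⟩
  rw [Mcode, hset, Set.ncard_coe_finset, Finset.card_image_of_injective _ ind_injective]
  have hdisj : Disjoint ((Sh h)ᶜ.image fun j => ({j} : Finset (Fin n)))
      ((Sh h).powersetCard 2) := by
    rw [Finset.disjoint_left]
    intro T hT1 hT2
    obtain ⟨j, _, rfl⟩ := Finset.mem_image.mp hT1
    rw [Finset.mem_powersetCard] at hT2
    simp at hT2
  rw [good, Finset.card_union_of_disjoint hdisj,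
    Finset.card_image_of_injective _ (fun a b e => Finset.singleton_injective e),
    Finset.card_compl, Finset.card_powersetCard]
  simp

lemma phi_ne_zero {h : Fin n → ZMod 2} (hh : h ≠ 0) : ∃ i, h i = 1 := by
  by_contra hc
  push_neg at hc
  exact hh (funext fun i => zmod2_eq_zero (hc i))

lemma finrank_ker_phi {h : Fin n → ZMod 2} (hh : h ≠ 0) :
    Module.finrank (ZMod 2) (LinearMap.ker (phi h)) = n - 1 := by
  obtain ⟨i, hi⟩ := phi_ne_zero hh
  have hsurj : Function.Surjective (phi h) := by
    intro z
    refine ⟨z • ind {i}, ?_⟩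
    rw [map_smul, phi_ind, Finset.sum_singleton, hi, smul_eq_mul, mul_one]
  have hr : LinearMap.range (phi h) = ⊤ := LinearMap.range_eq_top.mpr hsurj
  have := LinearMap.finrank_range_add_finrank_ker (phi h)
  rw [hr, finrank_top, Module.finrank_self, Module.finrank_pi, Fintype.card_fin] at this
  omega

lemma exists_ker_repr {C : Submodule (ZMod 2) (Fin (n + 1) → ZMod 2)}
    (hC : Module.finrank (ZMod 2) C = n) :
    ∃ h : Fin (n + 1) → ZMod 2, h ≠ 0 ∧ C = LinearMap.ker (phi h) := by
  have hlt : C < ⊤ := by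
    rw [lt_top_iff_ne_top]
    intro h
    rw [h, finrank_top, Module.finrank_pi, Fintype.card_fin] at hC
    omega
  obtain ⟨f, hf0, hfmap⟩ := Submodule.exists_dual_map_eq_bot_of_lt_top hlt inferInstance
  set h : Fin (n + 1) → ZMod 2 := fun i => f (fun j => if i = j then 1 else 0) with hdef
  have hphi : phi h = f := by
    refine LinearMap.ext fun x => ?_
    show ∑ i, h i * x i = f x
    rw [LinearMap.pi_apply_eq_sum_univ f x]
    refine Finset.sum_congr rfl fun i _ => ?_
    rw [smul_eq_mul, mul_comm]
  have hh0 : h ≠ 0 := by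
    intro e
    apply hf0
    rw [← hphi, e]
    refine LinearMap.ext fun x => ?_
    show ∑ i, (0 : Fin (n+1) → ZMod 2) i * x i = 0
    simp
  have hle : C ≤ LinearMap.ker (phi h) := by
    intro x hx
    rw [LinearMap.mem_ker, hphi]
    have : f x ∈ C.map f := Submodule.mem_map_of_mem hx
    rwa [hfmap, Submodule.mem_bot] at this
  refine ⟨h, hh0, Submodule.eq_of_le_of_finrank_eq hle ?_⟩
  rw [hC, finrank_ker_phi hh0]
  omega

lemma choose_bound : ∀ (d s : ℕ), 1 ≤ s → d + s.choose 2 ≤ (s + d).choose 2 := by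
  intro d
  induction d with
  | zero => intro s _; simp
  | succ d ih =>
    intro s hs
    have h1 : (s + (d + 1)).choose 2 = (s + d).choose 1 + (s + d).choose 2 := by
      rw [show s + (d + 1) = (s + d) + 1 by ring]
      exact Nat.choose_succ_succ (s + d) 1
    rw [h1, Nat.choose_one_right]
    have := ih s hs
    omega

end Count

theorem stmt8 (k : ℕ) (hk : 0 < k) :
    M2 (k + 1) k = (k + 1).choose 2 ∧ (k + 1).choose 2 = (k + 1) * k / 2 := by
  rw [M2]
  constructor
  · set A := {m | ∃ C : Submodule (ZMod 2) (Fin (k + 1) → ZMod 2),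
      Module.finrank (ZMod 2) C = k ∧ Mcode C = m} with hA
    set h1 : Fin (k + 1) → ZMod 2 := fun _ => 1 with hh1
    have hh1ne : h1 ≠ 0 := by
      intro e
      have := congrFun e ⟨0, by omega⟩
      simp [hh1] at this
    have hSuniv : Sh h1 = Finset.univ := by
      ext i; simp [Sh, hh1]
    have hmem : (k + 1).choose 2 ∈ A := by
      refine ⟨LinearMap.ker (phi h1), ?_, ?_⟩
      · rw [finrank_ker_phi hh1ne]
        omega
      · rw [Mcode_ker, hSuniv, Finset.card_univ, Fintype.card_fin]
        simp
    have hub : ∀ m ∈ A, m ≤ (k + 1).choose 2 := by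
      rintro m ⟨C, hC, rfl⟩
      obtain ⟨h, hh0, rfl⟩ := exists_ker_repr hC
      rw [Mcode_ker]
      set s := (Sh h).card with hs
      have hs1 : 1 ≤ s := by
        obtain ⟨i, hi⟩ := phi_ne_zero hh0
        exact Finset.card_pos.mpr ⟨i, mem_Sh.mpr hi⟩
      have hsn : s ≤ k + 1 := by
        rw [hs]
        exact le_trans (Finset.card_le_univ _) (by simp)
      have := choose_bound (k + 1 - s) s hs1
      rw [show s + (k + 1 - s) = k + 1 by omega] at this
      omega
    exact le_antisymm (csSup_le ⟨_, hmem⟩ hub) (le_csSup ⟨_, hub⟩ hmem)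
  · rw [Nat.choose_two_right]
    simp
end
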